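/- If p^V is the Dirichlet heat kernel of the cone V (given by the Bessel series) and β = 1 + α¹ + n/2, then for fixed x, y ∈ V, t^{β/2} p^V(t, x, √t y) → (v(x) v(y)/(2^{α¹} Γ(1+α¹))) e^{-|y|²/2} as t → ∞. -/

import Mathlib

open Filter

/-- The modified Bessel function of the first kind of order `ν`. -/
noncomputable def besselI (ν z : ℝ) : ℝ :=
  ∑' k : ℕ, (z / 2) ^ (ν + 2 * (k : ℝ)) / ((Nat.factorial k : ℝ) * Real.Gamma (ν + k + 1))

/-- The Dirichlet heat kernel of a cone with vertex `0`, in polar coordinates. -/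
noncomputable def conePV (n : ℕ) {D : Type*} (α : ℕ → ℝ) (m : ℕ → D → ℝ)
    (t r ρ : ℝ) (θ ω : D) : ℝ :=
  (1 / t) * (r * ρ) ^ (-((n : ℝ) / 2 - 1)) * Real.exp (-(r ^ 2 + ρ ^ 2) / (2 * t)) *
    ∑' i : ℕ, besselI (α i) (r * ρ / t) * m i θ * m i ω

open Real Topology
open scoped Nat

/-!
Write `I_ν(z) = (z/2)^ν G_ν(z²/4)` with the entire function `G_ν(w) = ∑ₖ wᵏ / (k! Γ(ν+k+1))`,
which satisfies `1/Γ(ν+1) ≤ G_ν(w) ≤ eʷ/Γ(ν+1)` for `w ≥ 0`. After the substitution `ρ ↦ √t ρ`,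
the `i`-th term of `t^{β/2} p^V` becomes
`t^{(α¹-αⁱ)/2} (rρ)^{αⁱ-(n/2-1)} 2^{-αⁱ} e^{-(r²+tρ²)/(2t)} G_{αⁱ}((rρ)²/(4t)) mⁱ(θ)mⁱ(ω)`.
Since `α¹ < αⁱ` for `i ≠ 0`, only the first term survives as `t → ∞`, and for `t ≥ 1` the terms
are dominated by the summable sequence of the summability condition, so Tannery's theorem lets
the limit pass through the series.
-/

noncomputable def besselIEntire (ν w : ℝ) : ℝ :=
  ∑' k : ℕ, w ^ k / (k ! * Gamma (ν + k + 1))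

section BesselIEntire

variable {ν w : ℝ}

theorem Gamma_add_one_le_Gamma_add_nat_add_one (hν : 0 ≤ ν) (k : ℕ) :
    Gamma (ν + 1) ≤ Gamma (ν + k + 1) := by
  induction k with
  | zero => simp
  | succ k ih =>
    have hrec : Gamma (ν + ↑(k + 1) + 1) = (ν + k + 1) * Gamma (ν + k + 1) := by
      rw [← Gamma_add_one (by positivity)]
      push_cast
      ring_nf
    rw [hrec]
    exact ih.trans (le_mul_of_one_le_left (by positivity) (by linarith))

theorem besselIEntire_term_le (hν : 0 ≤ ν) (hw : 0 ≤ w) (k : ℕ) :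
    w ^ k / (k ! * Gamma (ν + k + 1)) ≤ w ^ k / k ! / Gamma (ν + 1) := by
  rw [div_div]
  gcongr
  exact Gamma_add_one_le_Gamma_add_nat_add_one hν k

theorem summable_besselIEntire_term (hν : 0 ≤ ν) (hw : 0 ≤ w) :
    Summable fun k : ℕ => w ^ k / (k ! * Gamma (ν + k + 1)) :=
  (summable_pow_div_factorial w).div_const _ |>.of_nonneg_of_le
    (fun k => by positivity) (besselIEntire_term_le hν hw)

theorem one_div_Gamma_le_besselIEntire (hν : 0 ≤ ν) (hw : 0 ≤ w) :
    1 / Gamma (ν + 1) ≤ besselIEntire ν w := by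
  simpa [besselIEntire] using (summable_besselIEntire_term hν hw).le_tsum 0 fun k _ => by positivity

theorem besselIEntire_nonneg (hν : 0 ≤ ν) (hw : 0 ≤ w) : 0 ≤ besselIEntire ν w :=
  (by positivity : (0 : ℝ) ≤ 1 / Gamma (ν + 1)).trans (one_div_Gamma_le_besselIEntire hν hw)

theorem besselIEntire_le (hν : 0 ≤ ν) (hw : 0 ≤ w) :
    besselIEntire ν w ≤ exp w / Gamma (ν + 1) := by
  rw [exp_eq_exp_ℝ, ← (NormedSpace.expSeries_div_hasSum_exp w).div_const _ |>.tsum_eq]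
  exact (summable_besselIEntire_term hν hw).tsum_le_tsum (besselIEntire_term_le hν hw)
    ((summable_pow_div_factorial w).div_const _)

theorem tendsto_besselIEntire_nhdsGE_zero (hν : 0 ≤ ν) :
    Tendsto (besselIEntire ν) (𝓝[≥] 0) (𝓝 (1 / Gamma (ν + 1))) := by
  have hexp : Tendsto (fun w => exp w / Gamma (ν + 1)) (𝓝[≥] 0) (𝓝 (1 / Gamma (ν + 1))) := by
    simpa using ((continuous_exp.div_const _).tendsto 0).mono_left nhdsWithin_le_nhds
  exact tendsto_of_tendsto_of_tendsto_of_le_of_le' tendsto_const_nhds hexp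
    (eventually_nhdsWithin_of_forall fun w hw => one_div_Gamma_le_besselIEntire hν hw)
    (eventually_nhdsWithin_of_forall fun w hw => besselIEntire_le hν hw)

theorem besselI_eq_rpow_mul_besselIEntire {z : ℝ} (hz : 0 < z) :
    besselI ν z = (z / 2) ^ ν * besselIEntire ν (z ^ 2 / 4) := by
  rw [besselI, besselIEntire, ← tsum_mul_left]
  congr 1 with k
  rw [rpow_add (by positivity), show 2 * (k : ℝ) = (2 * k : ℕ) by push_cast; ring, rpow_natCast,
    pow_mul, mul_div_assoc]
  ring

end BesselIEntire

theorem tendsto_exp_neg_add_mul_div_atTop (r ρ : ℝ) :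
    Tendsto (fun t : ℝ => exp (-(r ^ 2 + t * ρ ^ 2) / (2 * t))) atTop
      (𝓝 (exp (-ρ ^ 2 / 2))) := by
  have hlin : Tendsto (fun t : ℝ => -r ^ 2 / 2 * t⁻¹ + -ρ ^ 2 / 2) atTop (𝓝 (-ρ ^ 2 / 2)) := by
    have := (tendsto_inv_atTop_zero.const_mul (-r ^ 2 / 2)).add_const (-ρ ^ 2 / 2)
    rwa [mul_zero, zero_add] at this
  refine (continuous_exp.tendsto _).comp (hlin.congr' ?_)
  filter_upwards [eventually_gt_atTop 0] with t ht
  field_simp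
  ring

theorem tendsto_const_div_mul_atTop_nhdsGE_zero {A b : ℝ} (hA : 0 ≤ A) (hb : 0 < b) :
    Tendsto (fun t : ℝ => A / (b * t)) atTop (𝓝[≥] 0) :=
  tendsto_nhdsWithin_iff.mpr ⟨tendsto_const_nhds.div_atTop (tendsto_id.const_mul_atTop hb),
    (eventually_gt_atTop 0).mono fun t ht => Set.mem_Ici.mpr (by positivity)⟩

/-- The `i`-th term of `t^{β/2} p^V(t, rθ, √t ρω)` divided by `mⁱ(θ) mⁱ(ω)`, for `a₀ = α¹`,
`a = αⁱ` and `c = n/2 - 1`. -/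
noncomputable def coneHeatSummand (a₀ a c r ρ t : ℝ) : ℝ :=
  t ^ ((a₀ - a) / 2) * ((r * ρ) ^ (a - c) / 2 ^ a * exp (-(r ^ 2 + t * ρ ^ 2) / (2 * t)) *
    besselIEntire a ((r * ρ) ^ 2 / (4 * t)))

theorem rpow_mul_conePV_sqrt_mul_eq_tsum {D : Type*} (n : ℕ) (α : ℕ → ℝ) (m : ℕ → D → ℝ)
    {β r ρ t : ℝ} (θ ω : D) (hβ : β = 1 + α 0 + (n : ℝ) / 2) (ht : 0 < t) (hr : 0 < r)
    (hρ : 0 < ρ) :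
    t ^ (β / 2) * conePV n α m t r (√t * ρ) θ ω =
      ∑' i, coneHeatSummand (α 0) (α i) ((n : ℝ) / 2 - 1) r ρ t * (m i θ * m i ω) := by
  rw [conePV, ← tsum_mul_left, ← tsum_mul_left]
  congr 1 with i
  have hscale : t ^ (β / 2) * (1 / t) * (r * (√t * ρ)) ^ (-((n : ℝ) / 2 - 1)) *
      (r * (√t * ρ) / t / 2) ^ α i =
        t ^ ((α 0 - α i) / 2) * ((r * ρ) ^ (α i - ((n : ℝ) / 2 - 1)) / 2 ^ α i) := by
    have hinv : 1 / t = exp (-log t) := by rw [exp_neg, exp_log ht, one_div]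
    rw [rpow_def_of_pos ht, rpow_def_of_pos ht, rpow_def_of_pos (by positivity),
      rpow_def_of_pos (by positivity), rpow_def_of_pos (by positivity), rpow_def_of_pos two_pos,
      hinv, ← exp_add, ← exp_add, ← exp_add, ← exp_sub, ← exp_add]
    congr 1
    rw [log_div (by positivity) two_ne_zero, log_div (by positivity) ht.ne',
      log_mul hr.ne' (by positivity), log_mul (by positivity) hρ.ne', log_mul hr.ne' hρ.ne',
      log_sqrt ht.le, hβ]
    ring
  have hsq : (√t * ρ) ^ 2 = t * ρ ^ 2 := by rw [mul_pow, sq_sqrt ht.le]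
  have harg : (r * (√t * ρ) / t) ^ 2 / 4 = (r * ρ) ^ 2 / (4 * t) := by
    rw [div_pow, mul_pow, mul_pow, sq_sqrt ht.le]
    field_simp
  rw [besselI_eq_rpow_mul_besselIEntire (by positivity), coneHeatSummand, hsq, harg]
  linear_combination (exp (-(r ^ 2 + t * ρ ^ 2) / (2 * t)) *
    besselIEntire (α i) ((r * ρ) ^ 2 / (4 * t)) * (m i θ * m i ω)) * hscale

section ConeHeatSummand

variable {a₀ a c r ρ : ℝ}

theorem tendsto_coneHeatSummand_factor (ha : 0 ≤ a) :
    Tendsto (fun t => (r * ρ) ^ (a - c) / 2 ^ a * exp (-(r ^ 2 + t * ρ ^ 2) / (2 * t)) *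
      besselIEntire a ((r * ρ) ^ 2 / (4 * t))) atTop
      (𝓝 ((r * ρ) ^ (a - c) / 2 ^ a * exp (-ρ ^ 2 / 2) * (1 / Gamma (a + 1)))) :=
  ((tendsto_exp_neg_add_mul_div_atTop r ρ).const_mul _).mul
    ((tendsto_besselIEntire_nhdsGE_zero ha).comp
      (tendsto_const_div_mul_atTop_nhdsGE_zero (sq_nonneg _) four_pos))

theorem tendsto_coneHeatSummand_self (ha : 0 ≤ a) :
    Tendsto (coneHeatSummand a a c r ρ) atTop
      (𝓝 ((r * ρ) ^ (a - c) / 2 ^ a * exp (-ρ ^ 2 / 2) * (1 / Gamma (a + 1)))) := by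
  refine (tendsto_coneHeatSummand_factor ha).congr fun t => ?_
  rw [coneHeatSummand, sub_self, zero_div, rpow_zero, one_mul]

theorem tendsto_coneHeatSummand_of_lt (ha : 0 ≤ a) (h : a₀ < a) :
    Tendsto (coneHeatSummand a₀ a c r ρ) atTop (𝓝 0) := by
  have hpow : Tendsto (fun t : ℝ => t ^ ((a₀ - a) / 2)) atTop (𝓝 0) := by
    rw [show (a₀ - a) / 2 = -((a - a₀) / 2) by ring]
    exact tendsto_rpow_neg_atTop (by linarith)
  have := hpow.mul (tendsto_coneHeatSummand_factor (c := c) (r := r) (ρ := ρ) ha)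
  rwa [zero_mul] at this

theorem norm_coneHeatSummand_le (ha : 0 ≤ a) (h : a₀ ≤ a) (hrρ : 0 ≤ r * ρ) {t : ℝ}
    (ht : 1 ≤ t) :
    ‖coneHeatSummand a₀ a c r ρ t‖ ≤
      (r * ρ) ^ (a - c) / (2 ^ a * Gamma (1 + a)) * exp ((r * ρ) ^ 2 / 4) := by
  have ht₀ : 0 < t := one_pos.trans_le ht
  have hw : 0 ≤ (r * ρ) ^ 2 / (4 * t) := by positivity
  have hG := besselIEntire_nonneg ha hw
  have hpow : t ^ ((a₀ - a) / 2) ≤ 1 := rpow_le_one_of_one_le_of_nonpos ht (by linarith)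
  have hexp : exp (-(r ^ 2 + t * ρ ^ 2) / (2 * t)) ≤ 1 :=
    exp_le_one_iff.mpr (div_nonpos_of_nonpos_of_nonneg (neg_nonpos.mpr (by positivity))
      (by positivity))
  have hG_le : besselIEntire a ((r * ρ) ^ 2 / (4 * t)) ≤ exp ((r * ρ) ^ 2 / 4) / Gamma (a + 1) :=
    (besselIEntire_le ha hw).trans <| by gcongr; linarith
  have hnonneg : 0 ≤ coneHeatSummand a₀ a c r ρ t :=
    mul_nonneg (by positivity) (mul_nonneg (by positivity) hG)
  rw [norm_of_nonneg hnonneg]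
  calc coneHeatSummand a₀ a c r ρ t
      ≤ 1 * ((r * ρ) ^ (a - c) / 2 ^ a * 1 * (exp ((r * ρ) ^ 2 / 4) / Gamma (a + 1))) := by
        rw [coneHeatSummand]
        gcongr
    _ = _ := by rw [add_comm 1 a]; ring

end ConeHeatSummand

theorem tendsto_tsum_coneHeatSummand_mul {a : ℕ → ℝ} {u : ℕ → ℝ} {c r ρ C : ℝ}
    (ha : ∀ i, 0 ≤ a i) (ha_lt : ∀ i ≠ 0, a 0 < a i) (hu : ∀ i, |u i| ≤ C) (hrρ : 0 ≤ r * ρ)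
    (hsum : Summable fun i => (r * ρ) ^ (a i - c) / (2 ^ a i * Gamma (1 + a i))) :
    Tendsto (fun t => ∑' i, coneHeatSummand (a 0) (a i) c r ρ t * u i) atTop
      (𝓝 ((r * ρ) ^ (a 0 - c) / 2 ^ a 0 * exp (-ρ ^ 2 / 2) * (1 / Gamma (a 0 + 1)) * u 0)) := by
  have ha_le (i : ℕ) : a 0 ≤ a i := by
    rcases eq_or_ne i 0 with rfl | hi
    exacts [le_rfl, (ha_lt i hi).le]
  have hlim (i : ℕ) : Tendsto (fun t => coneHeatSummand (a 0) (a i) c r ρ t * u i) atTop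
      (𝓝 (if i = 0 then (r * ρ) ^ (a 0 - c) / 2 ^ a 0 * exp (-ρ ^ 2 / 2) *
        (1 / Gamma (a 0 + 1)) * u 0 else 0)) := by
    rcases eq_or_ne i 0 with rfl | hi
    · simpa using (tendsto_coneHeatSummand_self (ha 0)).mul_const (u 0)
    · simpa [hi] using (tendsto_coneHeatSummand_of_lt (ha i) (ha_lt i hi)).mul_const (u i)
  have hbound : ∀ᶠ t in atTop, ∀ i, ‖coneHeatSummand (a 0) (a i) c r ρ t * u i‖ ≤
      (r * ρ) ^ (a i - c) / (2 ^ a i * Gamma (1 + a i)) * (exp ((r * ρ) ^ 2 / 4) * C) := by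
    filter_upwards [eventually_ge_atTop 1] with t ht i
    have hS := norm_coneHeatSummand_le (c := c) (ha i) (ha_le i) hrρ ht
    rw [norm_mul, ← mul_assoc]
    exact mul_le_mul hS (hu i) (norm_nonneg _) ((norm_nonneg _).trans hS)
  simpa only [tsum_ite_eq] using
    tendsto_tsum_of_dominated_convergence (hsum.mul_right _) hlim hbound

theorem cone_heat_kernel_yaglom_general {D : Type*} (n : ℕ)
    (lam : ℕ → ℝ) (m : ℕ → D → ℝ) (α : ℕ → ℝ)
    (hα : ∀ i, α i = Real.sqrt (lam i + ((n : ℝ) / 2 - 1) ^ 2))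
    (hlam0 : 0 < lam 0) (hlam01 : lam 0 < lam 1) (hlammono : Monotone lam)
    (hmbdd : ∃ Cm : ℝ, ∀ i θ, |m i θ| ≤ Cm)
    (hsum : ∀ r ρ : ℝ, 0 < r → 0 < ρ →
      Summable (fun i : ℕ =>
        (r * ρ) ^ (α i - ((n : ℝ) / 2 - 1)) / (2 ^ (α i) * Real.Gamma (1 + α i))))
    (β : ℝ) (hβ : β = 1 + α 0 + (n : ℝ) / 2)
    (r ρ : ℝ) (θ ω : D) (hr : 0 < r) (hρ : 0 < ρ) :
    Tendsto (fun t : ℝ => t ^ (β / 2) * conePV n α m t r (Real.sqrt t * ρ) θ ω) atTop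
      (nhds ((r ^ (α 0 - ((n : ℝ) / 2 - 1)) * m 0 θ) *
          (ρ ^ (α 0 - ((n : ℝ) / 2 - 1)) * m 0 ω) / (2 ^ (α 0) * Real.Gamma (1 + α 0)) *
        Real.exp (-ρ ^ 2 / 2))) := by
  obtain ⟨Cm, hCm⟩ := hmbdd
  have hα_lt (i : ℕ) (hi : i ≠ 0) : α 0 < α i := by
    have := hlammono (Nat.one_le_iff_ne_zero.mpr hi)
    rw [hα 0, hα i]
    exact sqrt_lt_sqrt (by positivity) (by linarith)
  have hm (i : ℕ) : |m i θ * m i ω| ≤ Cm * Cm := by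
    rw [abs_mul]
    exact mul_le_mul (hCm i θ) (hCm i ω) (abs_nonneg _) ((abs_nonneg _).trans (hCm i θ))
  have hlimit := tendsto_tsum_coneHeatSummand_mul (fun i => hα i ▸ sqrt_nonneg _) hα_lt hm
    (mul_pos hr hρ).le (hsum r ρ hr hρ)
  convert hlimit.congr' ?_ using 2
  · rw [mul_rpow hr.le hρ.le, add_comm (α 0) 1]
    ring
  · filter_upwards [eventually_gt_atTop 0] with t ht
    exact (rpow_mul_conePV_sqrt_mul_eq_tsum n α m θ ω hβ ht hr hρ).symm

/-- with `β = 1 + α¹ + n/2`, for fixed `x = rθ`, `y = ρω` in the cone,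
`t^{β/2} p^V(t, x, √t y) → (v(x)v(y)/(2^{α¹} Γ(1+α¹))) e^{-|y|²/2}` as `t → ∞`. -/
theorem cone_heat_kernel_yaglom {D : Type*} (n : ℕ) (hn : 1 ≤ n)
    (lam : ℕ → ℝ) (m : ℕ → D → ℝ) (α : ℕ → ℝ)
    (hα : ∀ i, α i = Real.sqrt (lam i + ((n : ℝ) / 2 - 1) ^ 2))
    (hlam0 : 0 < lam 0) (hlam01 : lam 0 < lam 1) (hlammono : Monotone lam)
    (hmbdd : ∃ Cm : ℝ, ∀ i θ, |m i θ| ≤ Cm)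
    (hsum : ∀ r ρ : ℝ, 0 < r → 0 < ρ →
      Summable (fun i : ℕ =>
        (r * ρ) ^ (α i - ((n : ℝ) / 2 - 1)) / (2 ^ (α i) * Real.Gamma (1 + α i))))
    (hser : ∀ t r ρ : ℝ, 0 < t → 0 < r → 0 < ρ → ∀ θ ω : D,
      Summable (fun i : ℕ => besselI (α i) (r * ρ / t) * m i θ * m i ω))
    (β : ℝ) (hβ : β = 1 + α 0 + (n : ℝ) / 2)
    (r ρ : ℝ) (θ ω : D) (hr : 0 < r) (hρ : 0 < ρ) :
    Tendsto (fun t : ℝ => t ^ (β / 2) * conePV n α m t r (Real.sqrt t * ρ) θ ω) atTop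
      (nhds ((r ^ (α 0 - ((n : ℝ) / 2 - 1)) * m 0 θ) *
          (ρ ^ (α 0 - ((n : ℝ) / 2 - 1)) * m 0 ω) / (2 ^ (α 0) * Real.Gamma (1 + α 0)) *
        Real.exp (-ρ ^ 2 / 2))) :=
  cone_heat_kernel_yaglom_general n lam m α hα hlam0 hlam01 hlammono hmbdd hsum β hβ r ρ θ ω hr hρ
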